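/- Let r ≥ 1, φ̄ ≥ 0, 0 < γ_m ≤ γ_M, C > 0 and α ≥ 0. Let V : ℝ^r → ℝ be continuously differentiable and nonnegative, and let ω : ℝ^r → ℝ be a function such that for every z ∈ ℝ^r: (i) Σ_{i=1}^{r-1} (∂V/∂z_i)(z)·z_{i+1} + (∂V/∂z_r)(z)·ω(z) ≤ -C·V(z)^α; (ii) (∂V/∂z_r)(z)·ω(z) ≤ 0; and (iii) ω(z) = 0 implies (∂V/∂z_r)(z) = 0. Let m, n ≥ 1 and define the control u(z) := (m/γ_m)·(ω(z) + n·φ̄·sign(ω(z))), with sign(0) = 0. Then for every z ∈ ℝ^r, every φ ∈ [-φ̄, φ̄] and every γ ∈ [γ_m, γ_M]: Σ_{i=1}^{r-1} (∂V/∂z_i)(z)·z_{i+1} + (∂V/∂z_r)(z)·(φ + γ·u(z)) ≤ -C·V(z)^α. In other words, V remains a Lyapunov function, satisfying the same differential inequality, for the perturbed integrator chain ż_i = z_{i+1} (i = 1,…,r-1), ż_r = φ(t) + γ(t)·u, uniformly over all perturbations φ(t) ∈ [-φ̄, φ̄] and gains γ(t) ∈ [γ_m, γ_M]. -/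

import Mathlib

/-!
Along the perturbed chain the vector field differs from the nominal one only in its last
coordinate, by `k = φ + γ u(z) - ω(z)`, so the derivative of `V` changes by `k · ∂V/∂z_r`.
The control is chosen so that `k` has the sign of `ω(z)`: for `ω(z) > 0`,
`γ u ≥ γ_m u = m (ω + n φ̄) ≥ ω + φ̄ ≥ ω - φ`, and symmetrically for `ω(z) < 0`.
Since `(∂V/∂z_r) ω ≤ 0`, and `∂V/∂z_r = 0` where `ω` vanishes, the extra term is `≤ 0`.
-/

/-- The vector field `(z₂, …, z_r, w)` of the integrator chain with input `w`. -/
def chainField {r : ℕ} (z : Fin r → ℝ) (w : ℝ) : Fin r → ℝ :=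
  fun j => if h : (j : ℕ) + 1 < r then z ⟨(j : ℕ) + 1, h⟩ else w

theorem chainField_eq_add_single {r : ℕ} (hr : 1 ≤ r) (z : Fin r → ℝ) (w w' : ℝ) :
    chainField z w =
      chainField z w' + (w - w') • Pi.single ⟨r - 1, Nat.sub_lt hr one_pos⟩ 1 := by
  funext j
  by_cases h : (j : ℕ) + 1 < r
  · have hj : j ≠ ⟨r - 1, Nat.sub_lt hr one_pos⟩ := fun hj => by simp [hj] at h; omega
    simp [chainField, h, hj]
  · have hj : j = ⟨r - 1, Nat.sub_lt hr one_pos⟩ := Fin.ext (by simp; omega)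
    rw [hj] at h ⊢
    simp [chainField, h]

theorem map_chainField {r : ℕ} (hr : 1 ≤ r) (L : (Fin r → ℝ) →L[ℝ] ℝ) (z : Fin r → ℝ)
    (w w' : ℝ) :
    L (chainField z w) =
      L (chainField z w') + (w - w') * L (Pi.single ⟨r - 1, Nat.sub_lt hr one_pos⟩ 1) := by
  rw [chainField_eq_add_single hr z w w', map_add, map_smul, smul_eq_mul]

noncomputable def robustControl (γm m n φbar w : ℝ) : ℝ :=
  (m / γm) * (w + n * φbar * Real.sign w)

theorem robustControl_neg (γm m n φbar w : ℝ) :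
    robustControl γm m n φbar (-w) = -robustControl γm m n φbar w := by
  simp only [robustControl, Real.sign_neg]
  ring

section robustControl

variable {γm γ m n φbar φ w : ℝ}

theorem le_add_mul_robustControl_of_pos (hγm : 0 < γm) (hγ : γm ≤ γ) (hm : 1 ≤ m)
    (hn : 1 ≤ n) (hφ : |φ| ≤ φbar) (hw : 0 < w) :
    w ≤ φ + γ * robustControl γm m n φbar w := by
  have hφbar : 0 ≤ φbar := (abs_nonneg φ).trans hφ
  have hu : γm * robustControl γm m n φbar w = m * (w + n * φbar) := by
    rw [robustControl, Real.sign_of_pos hw]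
    field_simp
  have hu_nonneg : 0 ≤ robustControl γm m n φbar w := by
    rw [robustControl, Real.sign_of_pos hw]
    positivity
  calc w ≤ φ + m * (w + n * φbar) := by
        nlinarith [neg_abs_le φ, mul_le_mul_of_nonneg_left hn hφbar,
          mul_le_mul_of_nonneg_right hm (by positivity : 0 ≤ w + n * φbar)]
    _ = φ + γm * robustControl γm m n φbar w := by rw [hu]
    _ ≤ φ + γ * robustControl γm m n φbar w := by gcongr

theorem mul_add_mul_robustControl_sub_nonneg (hγm : 0 < γm) (hγ : γm ≤ γ) (hm : 1 ≤ m)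
    (hn : 1 ≤ n) (hφ : |φ| ≤ φbar) :
    0 ≤ w * (φ + γ * robustControl γm m n φbar w - w) := by
  rcases lt_trichotomy w 0 with hw | rfl | hw
  · have := le_add_mul_robustControl_of_pos (φ := -φ) (φbar := φbar) hγm hγ hm hn
      (by rwa [abs_neg]) (neg_pos.mpr hw)
    rw [robustControl_neg] at this
    nlinarith
  · simp
  · have := le_add_mul_robustControl_of_pos hγm hγ hm hn hφ hw
    nlinarith

end robustControl

theorem mul_nonpos_of_mul_nonpos_of_mul_nonneg {p w k : ℝ} (hpw : p * w ≤ 0) (hwk : 0 ≤ w * k)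
    (hw : w ≠ 0) : p * k ≤ 0 := by
  have : w ^ 2 * (p * k) ≤ 0 := by nlinarith
  exact nonpos_of_mul_nonpos_right this (by positivity)

/-- Robustification theorem: if `ω` stabilizes the pure integrator chain with a `C¹`
nonnegative Lyapunov function `V` satisfying
`Σ_{i<r} (∂V/∂z_i) z_{i+1} + (∂V/∂z_r) ω(z) ≤ -C V^α` together with the structural
conditions `(∂V/∂z_r) ω ≤ 0` and `ω = 0 ⟹ ∂V/∂z_r = 0`, then for any `m, n ≥ 1` the control
`u(z) = (m/γ_m)(ω(z) + n φ̄ sign(ω(z)))` makes `V` satisfy the same differential inequality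
along the perturbed chain `ż_i = z_{i+1}`, `ż_r = φ + γ u(z)`, uniformly over all
`φ ∈ [-φ̄, φ̄]` and `γ ∈ [γ_m, γ_M]`. -/
theorem stmt16 (r : ℕ) (hr : 1 ≤ r) (φbar γm γM C α m n : ℝ)
    (hγm : 0 < γm)
    (hm : 1 ≤ m) (hn : 1 ≤ n)
    (V : (Fin r → ℝ) → ℝ)
    (ω : (Fin r → ℝ) → ℝ)
    (h1 : ∀ z : Fin r → ℝ,
        fderiv ℝ V z
            (fun j : Fin r => if h : (j : ℕ) + 1 < r then z ⟨(j : ℕ) + 1, h⟩ else ω z) ≤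
          -C * V z ^ α)
    (h2 : ∀ z : Fin r → ℝ,
        fderiv ℝ V z (Pi.single (⟨r - 1, by omega⟩ : Fin r) (1 : ℝ)) * ω z ≤ 0)
    (h3 : ∀ z : Fin r → ℝ, ω z = 0 →
        fderiv ℝ V z (Pi.single (⟨r - 1, by omega⟩ : Fin r) (1 : ℝ)) = 0) :
    ∀ (z : Fin r → ℝ) (φ γ : ℝ), |φ| ≤ φbar → γm ≤ γ → γ ≤ γM →
      fderiv ℝ V z
          (fun j : Fin r => if h : (j : ℕ) + 1 < r then z ⟨(j : ℕ) + 1, h⟩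
            else φ + γ * ((m / γm) * (ω z + n * φbar * Real.sign (ω z)))) ≤
        -C * V z ^ α := by
  intro z φ γ hφ hγ _
  change fderiv ℝ V z (chainField z (φ + γ * robustControl γm m n φbar (ω z))) ≤ _
  rw [map_chainField hr _ z _ (ω z)]
  have hextra : (φ + γ * robustControl γm m n φbar (ω z) - ω z) *
      fderiv ℝ V z (Pi.single ⟨r - 1, Nat.sub_lt hr one_pos⟩ 1) ≤ 0 := by
    rw [mul_comm]
    by_cases hω : ω z = 0
    · simp [h3 z hω]
    · exact mul_nonpos_of_mul_nonpos_of_mul_nonneg (h2 z)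
        (mul_add_mul_robustControl_sub_nonneg hγm hγ hm hn hφ) hω
  have hnominal : fderiv ℝ V z (chainField z (ω z)) ≤ -C * V z ^ α := h1 z
  linarith
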